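/- arXiv:1103.1041 — 2 statements merged into one kernel-verified Lean document; each statement's English description precedes it below -/
import Mathlib

section
/- (Lemma 4.1) Let λ ⊢ n, μ ⊢ n-1 with λ → μ, fix a λ-tableau t with 1 in the box λ\μ, let 2 ≤ l ≤ n and θ ∈ S_l. Then φ_{λ,μ}(θ) = (1/(n-1)_{l-1}) Σ_{γ,σ∈S_l : γσ=θ} sign(γ) N̂^{λ,μ}(γ,σ), where φ_{λ,μ} = (1/(n-1)!) Σ_{π∈S̃_{n-1}} π E_t π^{-1} and (n-1)_{l-1} = (n-1)(n-2)⋯(n-l+1) is the falling factorial. -/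
open scoped Classical

/-- `γ` belongs to the column stabilizer `C_t` of the tableau `t : Fin n ≃ lam.cells`
(the entries `1,…,n` are encoded as `0,…,n-1 : Fin n`; a cell `(i, j)` lies in row `i` and
column `j`). -/
def InColStab {n : ℕ} (lam : YoungDiagram) (t : Fin n ≃ lam.cells)
    (γ : Equiv.Perm (Fin n)) : Prop :=
  ∀ m : Fin n, ((t (γ m)) : ℕ × ℕ).2 = ((t m) : ℕ × ℕ).2

/-- `σ` belongs to the row stabilizer `R_t` of the tableau `t : Fin n ≃ lam.cells`. -/
def InRowStab {n : ℕ} (lam : YoungDiagram) (t : Fin n ≃ lam.cells)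
    (σ : Equiv.Perm (Fin n)) : Prop :=
  ∀ m : Fin n, ((t (σ m)) : ℕ × ℕ).1 = ((t m) : ℕ × ℕ).1

open scoped Classical in
/-- The Young symmetrizer `E_t = ∑_{γ ∈ C_t} ∑_{σ ∈ R_t} sign(γ) γσ ∈ ℂ[S_n]`. -/
noncomputable def youngSym {n : ℕ} (lam : YoungDiagram) (t : Fin n ≃ lam.cells) :
    MonoidAlgebra ℂ (Equiv.Perm (Fin n)) :=
  ∑ γ : Equiv.Perm (Fin n), ∑ σ : Equiv.Perm (Fin n),
    if InColStab lam t γ ∧ InRowStab lam t σ then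
      MonoidAlgebra.single (γ * σ) ((Equiv.Perm.sign γ : ℤ) : ℂ)
    else 0

open scoped Classical in
/-- The generalized character `φ_{λ,μ} = (1/(n-1)!) ∑_{π ∈ S̃_{n-1}} π E_t π⁻¹ ∈ ℂ[S_n]`, where
`S̃_{n-1}` is the stabilizer of the point `1` (encoded as `0 : Fin n`), viewed as an element of
the group algebra, i.e. as a function on `S_n`. -/
noncomputable def genChar {n : ℕ} (lam : YoungDiagram) (t : Fin n ≃ lam.cells) :
    MonoidAlgebra ℂ (Equiv.Perm (Fin n)) :=
  ((n - 1).factorial : ℂ)⁻¹ •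
    ∑ π : Equiv.Perm (Fin n),
      if ∀ i : Fin n, (i : ℕ) = 0 → π i = i then
        MonoidAlgebra.of ℂ (Equiv.Perm (Fin n)) π * youngSym lam t *
          MonoidAlgebra.of ℂ (Equiv.Perm (Fin n)) π⁻¹
      else 0

/-- `N̂^{λ,μ}(γ,σ)`: the number of all (not necessarily injective) maps `f : {1,…,l} → λ` with
`f(1) = λ∖μ`, such that `c ∘ f` is constant on each cycle of `γ` and `r ∘ f` is constant on each
cycle of `σ`. -/
noncomputable def Nhat {n : ℕ} (lam : YoungDiagram) (box : lam.cells)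
    (l : ℕ) (hl : l ≤ n) (γ σ : Equiv.Perm (Fin n)) : ℕ :=
  Nat.card {f : Fin l → lam.cells //
    (∀ a : Fin l, (a : ℕ) = 0 → f a = box) ∧
    (∀ a b : Fin l, γ.SameCycle (Fin.castLE hl a) (Fin.castLE hl b) →
      ((f a) : ℕ × ℕ).2 = ((f b) : ℕ × ℕ).2) ∧
    (∀ a b : Fin l, σ.SameCycle (Fin.castLE hl a) (Fin.castLE hl b) →
      ((f a) : ℕ × ℕ).1 = ((f b) : ℕ × ℕ).1)}

/-! Conjugating `E_t` by `π` gives the Young symmetrizer of the tableau `π t`, so `φ_{λ,μ}(θ)` is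
`1/(n-1)!` times a signed count of triples `(g, γ, σ)`: `g` a tableau with `1` in the box `λ∖μ`,
`γσ = θ`, `γ ∈ C_g`, `σ ∈ R_g`. A cell is determined by its row and column, so such `γ, σ` lie in
`S_l`; the conditions then only involve the restriction `f` of `g` to `{1,…,l}`, an injective map
with `(n-l)!` extensions to a tableau. Non-injective maps `f` cancel out: if `f a = f b` with
`a ≠ b`, then `(γ, σ) ↦ (γ (a b), (a b) σ)` preserves the conditions and flips the sign of `γ`. -/

open Equiv Function

section Cycles

variable {α β D : Type*} {γ δ : Perm α} {ι : β → α}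

lemma Equiv.Perm.SameCycle.apply_eq_of_comp_eq [Finite α] {H : α → D} (hH : H ∘ γ = H)
    {x y : α} (h : γ.SameCycle x y) : H x = H y := by
  obtain ⟨k, rfl⟩ := h.exists_nat_pow_eq
  rw [Perm.coe_pow, ← comp_apply (f := H), iterate_invariant hH]

lemma comp_eq_iff_forall_sameCycle [Finite α] (hγ : ∀ x ∉ Set.range ι, γ x = x)
    (H : α → D) : H ∘ γ = H ↔ ∀ a b, γ.SameCycle (ι a) (ι b) → H (ι a) = H (ι b) := by
  refine ⟨fun hH a b h => h.apply_eq_of_comp_eq hH, fun h => funext fun x => ?_⟩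
  by_cases hx : x ∈ Set.range ι
  · obtain ⟨a, rfl⟩ := hx
    obtain ⟨b, hb⟩ : γ (ι a) ∈ Set.range ι := by
      by_contra hout
      exact hout (by rw [γ.injective (hγ _ hout)]; exact Set.mem_range_self a)
    rw [comp_apply, ← hb]
    exact h b a (hb ▸ Perm.sameCycle_apply_left.2 Perm.SameCycle.rfl)
  · rw [comp_apply, hγ x hx]

lemma forall_sameCycle_iff_comp_extend [Finite α] (hι : Injective ι)
    (hγ : ∀ x ∉ Set.range ι, γ x = x) (v : β → D) (d : α → D) :
    (∀ a b, γ.SameCycle (ι a) (ι b) → v a = v b) ↔ extend ι v d ∘ γ = extend ι v d := by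
  simp only [comp_eq_iff_forall_sameCycle hγ, hι.extend_apply]

lemma forall_sameCycle_mul [Finite α] (hι : Injective ι) (hγ : ∀ x ∉ Set.range ι, γ x = x)
    (hδ : ∀ x ∉ Set.range ι, δ x = x) {v : β → D}
    (hvγ : ∀ a b, γ.SameCycle (ι a) (ι b) → v a = v b)
    (hvδ : ∀ a b, δ.SameCycle (ι a) (ι b) → v a = v b) :
    ∀ a b, (γ * δ).SameCycle (ι a) (ι b) → v a = v b := by
  -- extending `v` along `ι` turns both hypotheses into invariance of one function on `α`
  intro a
  have hγδ : ∀ x ∉ Set.range ι, (γ * δ) x = x := fun x hx => by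
    rw [Perm.mul_apply, hδ x hx, hγ x hx]
  rw [forall_sameCycle_iff_comp_extend hι hγ v (fun _ => v a)] at hvγ
  rw [forall_sameCycle_iff_comp_extend hι hδ v (fun _ => v a)] at hvδ
  refine (forall_sameCycle_iff_comp_extend hι hγδ v (fun _ => v a)).2 ?_ a
  rw [Perm.coe_mul, ← comp_assoc, hvγ, hvδ]

lemma swap_apply_of_notMem_range [DecidableEq α] {x : α} (hx : x ∉ Set.range ι) (a b : β) :
    swap (ι a) (ι b) x = x :=
  swap_apply_of_ne_of_ne (fun h => hx ⟨a, h.symm⟩) (fun h => hx ⟨b, h.symm⟩)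

lemma forall_sameCycle_swap [Finite α] [DecidableEq α] (hι : Injective ι) {v : β → D}
    {a₀ b₀ : β} (hv : v a₀ = v b₀) :
    ∀ a b, (swap (ι a₀) (ι b₀)).SameCycle (ι a) (ι b) → v a = v b := by
  intro a
  have hτ : ∀ x ∉ Set.range ι, swap (ι a₀) (ι b₀) x = x := fun x hx =>
    swap_apply_of_notMem_range hx _ _
  refine (forall_sameCycle_iff_comp_extend hι hτ v (fun _ => v a)).2 (funext fun x => ?_) a
  rw [comp_apply, swap_apply_def]
  split_ifs <;> simp_all

end Cycles

section Extensions

variable {α β C : Type*} [Fintype α] [Fintype β] [Fintype C] [DecidableEq α] [DecidableEq C]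
  {ι : β → α}

lemma card_equiv_comp_eq (hι : Injective ι) (hC : Fintype.card C = Fintype.card α)
    {f : β → C} (hf : Injective f) :
    Fintype.card {g : α ≃ C // g ∘ ι = f} = (Fintype.card α - Fintype.card β).factorial := by
  let e₀ : Set.range ι ≃ Set.range f := (Equiv.ofInjective ι hι).symm.trans (Equiv.ofInjective f hf)
  have he₀ : ∀ b, (e₀ ⟨ι b, b, rfl⟩ : C) = f b := fun b => by simp [e₀]
  have hext : {g : α ≃ C // g ∘ ι = f} ≃ {g : α ≃ C // ∀ x : Set.range ι, g x = e₀ x} :=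
    Equiv.subtypeEquivRight fun g => by
      simp only [funext_iff, comp_apply, Set.forall_subtype_range_iff, he₀]
  have hcompl : Fintype.card ((Set.range ι)ᶜ : Set α) = Fintype.card ((Set.range f)ᶜ : Set C) := by
    rw [Fintype.card_compl_set, Fintype.card_compl_set, Set.card_range_of_injective hι,
      Set.card_range_of_injective hf, hC]
  rw [Fintype.card_congr (hext.trans (Equiv.Set.compl e₀)),
    Fintype.card_equiv (Fintype.equivOfCardEq hcompl), Fintype.card_compl_set,
    Set.card_range_of_injective hι]

lemma card_equiv_comp [DecidableEq β] (hι : Injective ι) (hC : Fintype.card C = Fintype.card α)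
    (P : (β → C) → Prop) :
    Fintype.card {g : α ≃ C // P (g ∘ ι)} =
      (Fintype.card α - Fintype.card β).factorial *
        Fintype.card {f : β → C // Injective f ∧ P f} := by
  have hmaps : Set.MapsTo (fun g : α ≃ C => g ∘ ι) ({g | P (g ∘ ι)} : Finset (α ≃ C))
      ({f | Injective f ∧ P f} : Finset (β → C)) := fun g hg => by
    simp only [Finset.coe_filter, Finset.mem_univ, true_and, Set.mem_ofPred_eq] at hg ⊢
    exact ⟨g.injective.comp hι, hg⟩
  rw [Fintype.card_subtype, Fintype.card_subtype, Finset.card_eq_sum_card_fiberwise hmaps,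
    Finset.sum_const_nat fun f hf => ?_, mul_comm]
  rw [Finset.mem_filter] at hf
  rw [← card_equiv_comp_eq hι hC hf.2.1, Fintype.card_subtype, Finset.filter_filter]
  congr 1
  ext g
  simp only [Finset.mem_filter, Finset.mem_univ, true_and]
  exact ⟨And.right, fun h => ⟨h ▸ hf.2.2, h⟩⟩

end Extensions

lemma sum_sign_eq_zero_of_swap_invariant {α R : Type*} [Fintype α] [DecidableEq α] [Ring R]
    [IsAddTorsionFree R] {a b : α} (hab : a ≠ b) (A : Perm α → Perm α → Prop) [DecidableRel A]
    (hA : ∀ γ σ, A γ σ → A (γ * swap a b) (swap a b * σ)) :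
    ∑ γ : Perm α, ∑ σ : Perm α, (if A γ σ then ((Perm.sign γ : ℤ) : R) else 0) = 0 := by
  have hA' : ∀ γ σ, A (γ * swap a b) (swap a b * σ) ↔ A γ σ := fun γ σ =>
    ⟨fun h => by simpa [mul_swap_mul_self, swap_mul_self_mul] using hA _ _ h, hA γ σ⟩
  rw [← self_eq_neg]
  conv_lhs =>
    rw [← Equiv.sum_comp (Equiv.mulRight (swap a b))]
    enter [2, γ]
    rw [← Equiv.sum_comp (Equiv.mulLeft (swap a b))]
  simp [hA', Perm.sign_mul, Perm.sign_swap hab, ← Finset.sum_neg_distrib, apply_ite]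

section Tableaux

variable {n : ℕ} {lam : YoungDiagram}

lemma inColStab_symm_trans_conj_iff (t : Fin n ≃ lam.cells) (π γ : Perm (Fin n)) :
    InColStab lam (π.symm.trans t) (π * γ * π⁻¹) ↔ InColStab lam t γ := by
  simp only [InColStab, trans_apply, Perm.mul_apply, Perm.inv_def, symm_apply_apply]
  exact ⟨fun h m => by simpa using h (π m), fun h m => h _⟩

lemma inRowStab_symm_trans_conj_iff (t : Fin n ≃ lam.cells) (π σ : Perm (Fin n)) :
    InRowStab lam (π.symm.trans t) (π * σ * π⁻¹) ↔ InRowStab lam t σ := by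
  simp only [InRowStab, trans_apply, Perm.mul_apply, Perm.inv_def, symm_apply_apply]
  exact ⟨fun h m => by simpa using h (π m), fun h m => h _⟩

lemma of_mul_youngSym_mul_of_inv (t : Fin n ≃ lam.cells) (π : Perm (Fin n)) :
    MonoidAlgebra.of ℂ _ π * youngSym lam t * MonoidAlgebra.of ℂ _ π⁻¹ =
      youngSym lam (π.symm.trans t) := by
  simp only [youngSym, Finset.mul_sum, Finset.sum_mul]
  refine Fintype.sum_equiv (MulAut.conj π).toEquiv _ _ fun γ => ?_
  refine Fintype.sum_equiv (MulAut.conj π).toEquiv _ _ fun σ => ?_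
  have hsign : Perm.sign (π * γ * π⁻¹) = Perm.sign γ := by
    rw [map_mul, map_mul, map_inv, mul_inv_cancel_comm]
  simp only [MulEquiv.toEquiv_eq_coe, MulEquiv.coe_toEquiv, MulAut.conj_apply,
    inColStab_symm_trans_conj_iff, inRowStab_symm_trans_conj_iff, hsign]
  split_ifs
  · simp [MonoidAlgebra.of_apply, MonoidAlgebra.single_mul_single, mul_assoc]
  · simp

lemma genChar_eq_sum_youngSym (t : Fin n ≃ lam.cells) {box : lam.cells}
    (ht : ∀ i : Fin n, (i : ℕ) = 0 → t i = box) :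
    genChar lam t = ((n - 1).factorial : ℂ)⁻¹ • ∑ g : Fin n ≃ lam.cells,
      if ∀ i : Fin n, (i : ℕ) = 0 → g i = box then youngSym lam g else 0 := by
  rw [genChar]
  congr 1
  refine Fintype.sum_equiv ((Equiv.inv _).trans ((Equiv.refl _).equivCongr t)) _ _ fun π => ?_
  have hfix : (∀ i : Fin n, (i : ℕ) = 0 → π i = i) ↔
      ∀ i : Fin n, (i : ℕ) = 0 → t (π.symm i) = box :=
    forall₂_congr fun i hi => by rw [← ht i hi, t.apply_eq_iff_eq, π.symm_apply_eq, eq_comm]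
  rw [of_mul_youngSym_mul_of_inv]
  exact if_congr hfix rfl rfl

lemma coeff_youngSym (g : Fin n ≃ lam.cells) (ρ : Perm (Fin n)) :
    (youngSym lam g).coeff ρ = ∑ γ : Perm (Fin n), ∑ σ : Perm (Fin n),
      if InColStab lam g γ ∧ InRowStab lam g σ ∧ γ * σ = ρ then ((Perm.sign γ : ℤ) : ℂ) else 0 := by
  simp only [youngSym, MonoidAlgebra.coeff_sum, Finset.sum_apply']
  refine Fintype.sum_congr _ _ fun γ => Fintype.sum_congr _ _ fun σ => ?_
  split_ifs <;> simp_all [MonoidAlgebra.coeff_single]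

variable (lam) in
noncomputable def numTableaux (box : lam.cells) (γ σ : Perm (Fin n)) : ℕ :=
  Fintype.card {g : Fin n ≃ lam.cells //
    (∀ i : Fin n, (i : ℕ) = 0 → g i = box) ∧ InColStab lam g γ ∧ InRowStab lam g σ}

lemma coeff_genChar (t : Fin n ≃ lam.cells) {box : lam.cells}
    (ht : ∀ i : Fin n, (i : ℕ) = 0 → t i = box) (θ : Perm (Fin n)) :
    (genChar lam t).coeff θ = ((n - 1).factorial : ℂ)⁻¹ *
      ∑ γ : Perm (Fin n), ∑ σ : Perm (Fin n),
        if γ * σ = θ then ((Perm.sign γ : ℤ) : ℂ) * (numTableaux lam box γ σ : ℂ) else 0 := by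
  rw [genChar_eq_sum_youngSym t ht, MonoidAlgebra.coeff_smul_apply, smul_eq_mul,
    MonoidAlgebra.coeff_sum, Finset.sum_apply']
  congr 1
  calc _ = ∑ g : Fin n ≃ lam.cells, ∑ γ : Perm (Fin n), ∑ σ : Perm (Fin n),
        if γ * σ = θ ∧ ((∀ i : Fin n, (i : ℕ) = 0 → g i = box) ∧ InColStab lam g γ ∧
          InRowStab lam g σ) then ((Perm.sign γ : ℤ) : ℂ) else 0 := by
        refine Fintype.sum_congr _ _ fun g => ?_
        split_ifs with hg
        · rw [coeff_youngSym]
          refine Fintype.sum_congr _ _ fun γ => Fintype.sum_congr _ _ fun σ => ?_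
          exact if_congr (by tauto) rfl rfl
        · simp [hg]
    _ = _ := by
        rw [Finset.sum_comm]
        refine Fintype.sum_congr _ _ fun γ => ?_
        rw [Finset.sum_comm]
        refine Fintype.sum_congr _ _ fun σ => ?_
        rw [numTableaux, Fintype.card_subtype, Finset.natCast_card_filter, Finset.mul_sum]
        by_cases h : γ * σ = θ <;> simp [h]

lemma eq_of_inColStab_of_inRowStab {g : Fin n ≃ lam.cells} {γ σ : Perm (Fin n)}
    (hγ : InColStab lam g γ) (hσ : InRowStab lam g σ) {p : Fin n} (hp : γ (σ p) = p) :
    σ p = p := by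
  have hcol := hγ (σ p)
  rw [hp] at hcol
  exact g.injective (Subtype.ext (Prod.ext (hσ p) hcol.symm))

lemma numTableaux_eq_zero {l : ℕ} (box : lam.cells) {γ σ θ : Perm (Fin n)}
    (hθ : ∀ i : Fin n, l ≤ (i : ℕ) → θ i = i) (hmul : γ * σ = θ)
    (hγσ : ¬((∀ i : Fin n, l ≤ (i : ℕ) → γ i = i) ∧ ∀ i : Fin n, l ≤ (i : ℕ) → σ i = i)) :
    numTableaux lam box γ σ = 0 := by
  refine Fintype.card_eq_zero_iff.2 ⟨fun ⟨g, _, hγ, hσ⟩ => hγσ ?_⟩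
  have hθ' : ∀ i : Fin n, l ≤ (i : ℕ) → γ (σ i) = i := fun i hi => by
    rw [← Perm.mul_apply, hmul, hθ i hi]
  have hσl : ∀ i : Fin n, l ≤ (i : ℕ) → σ i = i := fun i hi =>
    eq_of_inColStab_of_inRowStab hγ hσ (hθ' i hi)
  exact ⟨fun i hi => by simpa [hσl i hi] using hθ' i hi, hσl⟩

end Tableaux

section NhatMaps

variable {n l : ℕ} {lam : YoungDiagram}

lemma notMem_range_castLE_iff (hln : l ≤ n) {i : Fin n} :
    i ∉ Set.range (Fin.castLE hln) ↔ l ≤ (i : ℕ) := by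
  simp [Fin.range_castLE]

lemma forall_le_iff_forall_notMem_range_castLE (hln : l ≤ n) {p : Fin n → Prop} :
    (∀ i : Fin n, l ≤ (i : ℕ) → p i) ↔ ∀ x ∉ Set.range (Fin.castLE hln), p x := by
  simp only [notMem_range_castLE_iff]

variable (lam) in
def IsNhatMap (box : lam.cells) (hln : l ≤ n) (γ σ : Perm (Fin n)) (f : Fin l → lam.cells) :
    Prop :=
  (∀ a : Fin l, (a : ℕ) = 0 → f a = box) ∧
    (∀ a b : Fin l, γ.SameCycle (Fin.castLE hln a) (Fin.castLE hln b) →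
      ((f a) : ℕ × ℕ).2 = ((f b) : ℕ × ℕ).2) ∧
    (∀ a b : Fin l, σ.SameCycle (Fin.castLE hln a) (Fin.castLE hln b) →
      ((f a) : ℕ × ℕ).1 = ((f b) : ℕ × ℕ).1)

lemma Nhat_eq_card (box : lam.cells) (hln : l ≤ n) (γ σ : Perm (Fin n)) :
    Nhat lam box l hln γ σ = Fintype.card {f // IsNhatMap lam box hln γ σ f} := by
  rw [Nhat, Nat.card_eq_fintype_card]
  exact Fintype.card_congr (Equiv.refl _)

lemma IsNhatMap.mul_swap {box : lam.cells} {hln : l ≤ n} {γ σ : Perm (Fin n)}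
    {f : Fin l → lam.cells} (hf : IsNhatMap lam box hln γ σ f)
    (hγ : ∀ i : Fin n, l ≤ (i : ℕ) → γ i = i) (hσ : ∀ i : Fin n, l ≤ (i : ℕ) → σ i = i)
    {a b : Fin l} (hab : f a = f b) :
    IsNhatMap lam box hln (γ * swap (Fin.castLE hln a) (Fin.castLE hln b))
      (swap (Fin.castLE hln a) (Fin.castLE hln b) * σ) f := by
  rw [forall_le_iff_forall_notMem_range_castLE hln] at hγ hσ
  have hι := Fin.castLE_injective hln
  have hτ : ∀ x ∉ Set.range (Fin.castLE hln), swap (Fin.castLE hln a) (Fin.castLE hln b) x = x :=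
    fun x hx => swap_apply_of_notMem_range hx a b
  obtain ⟨hbox, hcol, hrow⟩ := hf
  exact ⟨hbox, forall_sameCycle_mul hι hγ hτ hcol (forall_sameCycle_swap hι (by rw [hab])),
    forall_sameCycle_mul hι hτ hσ (forall_sameCycle_swap hι (by rw [hab])) hrow⟩

lemma isNhatMap_comp_castLE_iff (hl : 0 < l) (hln : l ≤ n) (box : lam.cells)
    {γ σ : Perm (Fin n)} (hγ : ∀ i : Fin n, l ≤ (i : ℕ) → γ i = i)
    (hσ : ∀ i : Fin n, l ≤ (i : ℕ) → σ i = i) (g : Fin n ≃ lam.cells) :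
    IsNhatMap lam box hln γ σ (g ∘ Fin.castLE hln) ↔
      (∀ i : Fin n, (i : ℕ) = 0 → g i = box) ∧ InColStab lam g γ ∧ InRowStab lam g σ := by
  rw [forall_le_iff_forall_notMem_range_castLE hln] at hγ hσ
  refine and_congr ⟨fun h i hi => ?_, fun h a ha => h _ ha⟩ (and_congr ?_ ?_)
  · rw [← h ⟨0, hl⟩ rfl, comp_apply, show Fin.castLE hln ⟨0, hl⟩ = i from Fin.ext hi.symm]
  · exact (funext_iff.symm.trans (comp_eq_iff_forall_sameCycle hγ fun m => ((g m : ℕ × ℕ)).2)).symm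
  · exact (funext_iff.symm.trans (comp_eq_iff_forall_sameCycle hσ fun m => ((g m : ℕ × ℕ)).1)).symm

end NhatMaps

section Counting

variable {n l : ℕ} {lam : YoungDiagram}

lemma numTableaux_eq (hl : 0 < l) (hln : l ≤ n) (hlam : lam.card = n) (box : lam.cells)
    {γ σ : Perm (Fin n)} (hγ : ∀ i : Fin n, l ≤ (i : ℕ) → γ i = i)
    (hσ : ∀ i : Fin n, l ≤ (i : ℕ) → σ i = i) :
    numTableaux lam box γ σ = (n - l).factorial *
      Fintype.card {f : Fin l → lam.cells // Injective f ∧ IsNhatMap lam box hln γ σ f} := by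
  have hC : Fintype.card lam.cells = Fintype.card (Fin n) := by
    rw [Fintype.card_coe, Fintype.card_fin, ← hlam]
  rw [numTableaux, ← Fintype.card_congr
      (Equiv.subtypeEquivRight (isNhatMap_comp_castLE_iff hl hln box hγ hσ)),
    card_equiv_comp (Fin.castLE_injective hln) hC, Fintype.card_fin, Fintype.card_fin]

lemma ite_sign_mul_numTableaux (hl : 0 < l) (hln : l ≤ n) (hlam : lam.card = n)
    (box : lam.cells) {θ : Perm (Fin n)} (hθ : ∀ i : Fin n, l ≤ (i : ℕ) → θ i = i)
    (γ σ : Perm (Fin n)) :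
    (if γ * σ = θ then ((Perm.sign γ : ℤ) : ℂ) * (numTableaux lam box γ σ : ℂ) else 0) =
      (n - l).factorial *
        if (∀ i : Fin n, l ≤ (i : ℕ) → γ i = i) ∧ (∀ i : Fin n, l ≤ (i : ℕ) → σ i = i) ∧
            γ * σ = θ then
          ((Perm.sign γ : ℤ) : ℂ) * (Fintype.card {f : Fin l → lam.cells //
            Injective f ∧ IsNhatMap lam box hln γ σ f} : ℂ)
        else 0 := by
  by_cases hmul : γ * σ = θ
  · by_cases hγσ : (∀ i : Fin n, l ≤ (i : ℕ) → γ i = i) ∧ ∀ i : Fin n, l ≤ (i : ℕ) → σ i = i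
    · rw [if_pos hmul, if_pos ⟨hγσ.1, hγσ.2, hmul⟩, numTableaux_eq hl hln hlam box hγσ.1 hγσ.2]
      push_cast
      ring
    · simp [hmul, hγσ, numTableaux_eq_zero box hθ hmul hγσ]
  · simp [hmul]

lemma sum_sign_mul_card_not_injective_eq_zero (hln : l ≤ n) (box : lam.cells)
    (θ : Perm (Fin n)) :
    ∑ γ : Perm (Fin n), ∑ σ : Perm (Fin n),
      (if (∀ i : Fin n, l ≤ (i : ℕ) → γ i = i) ∧ (∀ i : Fin n, l ≤ (i : ℕ) → σ i = i) ∧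
          γ * σ = θ then
        ((Perm.sign γ : ℤ) : ℂ) * (Fintype.card {f : Fin l → lam.cells //
          ¬Injective f ∧ IsNhatMap lam box hln γ σ f} : ℂ)
      else 0) = 0 := by
  calc _ = ∑ γ : Perm (Fin n), ∑ σ : Perm (Fin n), ∑ f : Fin l → lam.cells,
        if ((∀ i : Fin n, l ≤ (i : ℕ) → γ i = i) ∧ (∀ i : Fin n, l ≤ (i : ℕ) → σ i = i) ∧
            γ * σ = θ) ∧ ¬Injective f ∧ IsNhatMap lam box hln γ σ f then
          ((Perm.sign γ : ℤ) : ℂ)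
        else 0 := by
        refine Fintype.sum_congr _ _ fun γ => Fintype.sum_congr _ _ fun σ => ?_
        rw [Fintype.card_subtype, Finset.natCast_card_filter, Finset.mul_sum]
        split_ifs with h
        · refine Fintype.sum_congr _ _ fun f => ?_
          rw [mul_ite, mul_one, mul_zero]
          exact if_congr (and_iff_right h).symm rfl rfl
        · simp [h]
    _ = ∑ γ : Perm (Fin n), ∑ f : Fin l → lam.cells, ∑ σ : Perm (Fin n), _ :=
        Fintype.sum_congr _ _ fun γ => Finset.sum_comm
    _ = 0 := Finset.sum_comm.trans (Finset.sum_eq_zero fun f _ => ?_)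
  by_cases hf : Injective f
  · simp [hf]
  obtain ⟨a, b, hfab, hab⟩ := Function.not_injective_iff.1 hf
  refine sum_sign_eq_zero_of_swap_invariant ((Fin.castLE_injective hln).ne hab) _ ?_
  rintro γ σ ⟨⟨hγ, hσ, hθ⟩, hni, hN⟩
  have hτ : ∀ i : Fin n, l ≤ (i : ℕ) → swap (Fin.castLE hln a) (Fin.castLE hln b) i = i :=
    fun i hi => swap_apply_of_notMem_range ((notMem_range_castLE_iff hln).2 hi) a b
  refine ⟨⟨fun i hi => ?_, fun i hi => ?_, ?_⟩, hni, hN.mul_swap hγ hσ hfab⟩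
  · rw [Perm.mul_apply, hτ i hi, hγ i hi]
  · rw [Perm.mul_apply, hσ i hi, hτ i hi]
  · rw [mul_assoc, swap_mul_self_mul, hθ]

lemma card_isNhatMap_eq (hln : l ≤ n) (box : lam.cells) (γ σ : Perm (Fin n)) :
    Fintype.card {f // IsNhatMap lam box hln γ σ f} =
      Fintype.card {f : Fin l → lam.cells // Injective f ∧ IsNhatMap lam box hln γ σ f} +
        Fintype.card {f : Fin l → lam.cells // ¬Injective f ∧ IsNhatMap lam box hln γ σ f} := by
  simp only [Fintype.card_subtype, ← Finset.card_filter_add_card_filter_not (p := Injective)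
    (s := {f | IsNhatMap lam box hln γ σ f}), Finset.filter_filter, and_comm]

lemma sum_sign_mul_Nhat_eq (hln : l ≤ n) (box : lam.cells) (θ : Perm (Fin n)) :
    ∑ γ : Perm (Fin n), ∑ σ : Perm (Fin n),
      (if (∀ i : Fin n, l ≤ (i : ℕ) → γ i = i) ∧ (∀ i : Fin n, l ≤ (i : ℕ) → σ i = i) ∧
          γ * σ = θ then
        ((Perm.sign γ : ℤ) : ℂ) * (Nhat lam box l hln γ σ : ℂ)
      else 0) =
    ∑ γ : Perm (Fin n), ∑ σ : Perm (Fin n),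
      (if (∀ i : Fin n, l ≤ (i : ℕ) → γ i = i) ∧ (∀ i : Fin n, l ≤ (i : ℕ) → σ i = i) ∧
          γ * σ = θ then
        ((Perm.sign γ : ℤ) : ℂ) * (Fintype.card {f : Fin l → lam.cells //
          Injective f ∧ IsNhatMap lam box hln γ σ f} : ℂ)
      else 0) := by
  symm
  rw [← add_zero (∑ γ : Perm (Fin n), _), ← sum_sign_mul_card_not_injective_eq_zero hln box θ]
  simp only [← Finset.sum_add_distrib]
  refine Fintype.sum_congr _ _ fun γ => Fintype.sum_congr _ _ fun σ => ?_
  split_ifs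
  · rw [Nhat_eq_card, card_isNhatMap_eq]
    push_cast
    ring
  · rw [add_zero]

end Counting

lemma inv_factorial_mul_factorial_eq {n l : ℕ} (hl : 0 < l) (hln : l ≤ n) :
    ((n - 1).factorial : ℂ)⁻¹ * (n - l).factorial = ((n - 1).descFactorial (l - 1) : ℂ)⁻¹ := by
  rw [← Nat.factorial_mul_descFactorial (show l - 1 ≤ n - 1 by omega),
    show n - 1 - (l - 1) = n - l by omega, Nat.cast_mul, mul_inv, mul_right_comm,
    inv_mul_cancel₀ (Nat.cast_ne_zero.2 (Nat.factorial_ne_zero _)), one_mul]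

theorem genChar_eq_signed_sum_Nhat_general
    {n : ℕ} (lam : YoungDiagram)
    (hlam : lam.card = n)
    (box : lam.cells)
    (t : Fin n ≃ lam.cells) (ht : ∀ i : Fin n, (i : ℕ) = 0 → t i = box)
    (l : ℕ) (hl2 : 2 ≤ l) (hln : l ≤ n)
    (θ : Equiv.Perm (Fin n)) (hθ : ∀ i : Fin n, l ≤ (i : ℕ) → θ i = i) :
    (genChar lam t).coeff θ =
      (((n - 1).descFactorial (l - 1) : ℕ) : ℂ)⁻¹ *
        ∑ γ : Equiv.Perm (Fin n), ∑ σ : Equiv.Perm (Fin n),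
          if (∀ i : Fin n, l ≤ (i : ℕ) → γ i = i) ∧ (∀ i : Fin n, l ≤ (i : ℕ) → σ i = i) ∧
              γ * σ = θ then
            ((Equiv.Perm.sign γ : ℤ) : ℂ) * (Nhat lam box l hln γ σ : ℂ)
          else 0 := by
  have hl : 0 < l := by omega
  rw [coeff_genChar t ht, sum_sign_mul_Nhat_eq hln box θ,
    ← inv_factorial_mul_factorial_eq hl hln, mul_assoc]
  congr 1
  rw [Finset.mul_sum]
  refine Fintype.sum_congr _ _ fun γ => ?_
  rw [Finset.mul_sum]
  exact Fintype.sum_congr _ _ (ite_sign_mul_numTableaux hl hln hlam box hθ γ)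

/-- **Lemma 4.1.** Let `λ ⊢ n`, `μ ⊢ n-1` with `λ → μ`, fix a `λ`-tableau `t` with
`1` in the box `λ∖μ`, let `2 ≤ l ≤ n` and `θ ∈ S_l`.  Then
`φ_{λ,μ}(θ) = (1/(n-1)_{l-1}) ∑_{γ,σ ∈ S_l, γσ=θ} sign(γ) N̂^{λ,μ}(γ,σ)`, where
`(n-1)_{l-1} = (n-1)(n-2)⋯(n-l+1)` is the falling factorial. -/
theorem genChar_eq_signed_sum_Nhat
    {n : ℕ} (hn : 2 ≤ n) (lam mu : YoungDiagram)
    (hlam : lam.card = n) (hmu : mu.card = n - 1) (hsub : mu ≤ lam)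
    (box : lam.cells) (hbox : (box : ℕ × ℕ) ∉ mu)
    (t : Fin n ≃ lam.cells) (ht : ∀ i : Fin n, (i : ℕ) = 0 → t i = box)
    (l : ℕ) (hl2 : 2 ≤ l) (hln : l ≤ n)
    (θ : Equiv.Perm (Fin n)) (hθ : ∀ i : Fin n, l ≤ (i : ℕ) → θ i = i) :
    (genChar lam t).coeff θ =
      (((n - 1).descFactorial (l - 1) : ℕ) : ℂ)⁻¹ *
        ∑ γ : Equiv.Perm (Fin n), ∑ σ : Equiv.Perm (Fin n),
          if (∀ i : Fin n, l ≤ (i : ℕ) → γ i = i) ∧ (∀ i : Fin n, l ≤ (i : ℕ) → σ i = i) ∧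
              γ * σ = θ then
            ((Equiv.Perm.sign γ : ℤ) : ℂ) * (Nhat lam box l hln γ σ : ℂ)
          else 0 :=
  genChar_eq_signed_sum_Nhat_general lam hlam box t ht l hl2 hln θ hθ
end

section
/- (Diaconis' formula) Let λ = (λ_1,…,λ_k) ⊢ n with conjugate partition λ', let μ ⊢ n-1 with λ → μ, suppose the removed box λ\μ lies in row i and column j, and fix a λ-tableau t with 1 in the box λ\μ. Then the generalized character evaluated at the transposition (12) is φ_{λ,μ}((12)) = (λ_i - λ'_j)/(n-1), where φ_{λ,μ} = (1/(n-1)!) Σ_{π∈S̃_{n-1}} π E_t π^{-1}. -/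
/-!
Write `τ = (1 2)` and `E = E_t`. After reindexing `π ↦ π⁻¹`, the coefficient of `τ` in
`π⁻¹ E π` is the coefficient of `π τ π⁻¹ = (1 π(2))` in `E`, and as `π` runs over `S̃_{n-1}`
each `m ≠ 1` is hit as `π(2)` exactly `(n-2)!` times. A transposition `(1 m)` factors as `γσ`
with `γ ∈ C_t`, `σ ∈ R_t` only as `1 · (1 m)` (if `m` lies in the row of `1`) or `(1 m) · 1`
(if it lies in its column), because an element of `R_t` sending `x` into the column of `x`
fixes `x`. So the coefficient of `(1 m)` in `E` is `[m in row i] - [m in column j]`; summing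
over `m ≠ 1` gives `(λ_i - 1) - (λ'_j - 1)`, and `(n-2)!/(n-1)! = 1/(n-1)`.
-/

open scoped Classical

open Finset Equiv
open scoped Nat

theorem Equiv.forall_apply_swap_eq_iff {α β : Type*} [DecidableEq α] {f : α → β} {a b : α} :
    (∀ x, f (swap a b x) = f x) ↔ f a = f b := by
  refine ⟨fun h => by simpa using (h a).symm, fun h x => ?_⟩
  rw [swap_apply_def]
  split_ifs with hxa hxb
  · rw [hxa, h]
  · rw [hxb, h]
  · rfl

namespace Equiv.Perm

variable {α : Type*} [DecidableEq α]

theorem eq_one_or_eq_swap_of_forall_apply_eq_self {σ : Perm α} {a b : α} (hab : a ≠ b)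
    (h : ∀ x, x ≠ a → x ≠ b → σ x = x) : σ = 1 ∨ σ = swap a b := by
  have hmaps : ∀ x, x = a ∨ x = b → σ x = a ∨ σ x = b := by
    intro x hx
    by_contra! hσx
    have hfix : σ x = x := σ.injective (h (σ x) hσx.1 hσx.2)
    rcases hx with rfl | rfl <;> simp_all
  rcases hmaps a (.inl rfl) with ha | ha
  · have hb : σ b = b := (hmaps b (.inr rfl)).resolve_left fun hb =>
      hab (σ.injective (ha.trans hb.symm))
    left
    ext x
    by_cases hxa : x = a
    · simp [hxa, ha]
    by_cases hxb : x = b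
    · simp [hxb, hb]
    simp [h x hxa hxb]
  · have hb : σ b = a := (hmaps b (.inr rfl)).resolve_right fun hb =>
      hab (σ.injective (ha.trans hb.symm))
    right
    ext x
    by_cases hxa : x = a
    · simp [hxa, ha]
    by_cases hxb : x = b
    · simp [hxb, hb]
    simp [h x hxa hxb, swap_apply_of_ne_of_ne hxa hxb]

variable [Fintype α]

theorem card_filter_apply_eq_self_and_apply_eq_self {a b : α} (hab : a ≠ b) :
    #{π : Perm α | π a = a ∧ π b = b} = (Fintype.card α - 2)! := by
  let p : α → Prop := fun x => ¬(x = a ∨ x = b)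
  have hfix : ∀ π : Perm α, (π a = a ∧ π b = b) ↔ ∀ x, ¬p x → π x = x := by
    intro π
    simp only [p, not_not]
    exact ⟨fun ⟨ha, hb⟩ x hx => by rcases hx with rfl | rfl <;> assumption,
      fun h => ⟨h a (.inl rfl), h b (.inr rfl)⟩⟩
  rw [← Fintype.card_subtype, Fintype.card_congr (subtypeEquivRight hfix),
    ← Fintype.card_congr (Perm.subtypeEquivSubtypePerm p), Fintype.card_perm,
    Fintype.card_subtype_compl, Fintype.card_subtype]
  simp [filter_or, filter_eq', card_pair hab]

theorem card_filter_apply_eq_self_and_apply_eq {a b c : α} (hab : a ≠ b) (hac : a ≠ c) :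
    #{π : Perm α | π a = a ∧ π b = c} = (Fintype.card α - 2)! := by
  rw [← card_filter_apply_eq_self_and_apply_eq_self hab]
  refine card_nbij' (swap b c * ·) (swap b c * ·) ?_ ?_ ?_ ?_ <;> intro π <;>
    simp +contextual [swap_apply_of_ne_of_ne hab hac, ← mul_assoc]

theorem sum_filter_apply_eq_self {M : Type*} [AddCommMonoid M] {a b : α} (hab : a ≠ b)
    (f : α → M) :
    ∑ π : Perm α with π a = a, f (π b) = (Fintype.card α - 2)! • ∑ c ∈ univ.erase a, f c := by
  rw [← sum_fiberwise_of_maps_to' (t := univ.erase a) (g := fun π : Perm α => π b), smul_sum]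
  · refine sum_congr rfl fun c hc => ?_
    rw [sum_const, filter_filter,
      card_filter_apply_eq_self_and_apply_eq hab (ne_of_mem_erase hc).symm]
  · intro π hπ
    rw [mem_filter] at hπ
    rw [mem_erase, ← hπ.2, Ne, π.injective.eq_iff]
    exact ⟨hab.symm, mem_univ _⟩

end Equiv.Perm

theorem MonoidAlgebra.coeff_of_mul_mul_of_inv {k G : Type*} [Semiring k] [Group G]
    (x : MonoidAlgebra k G) (π g : G) :
    (of k G π * x * of k G π⁻¹).coeff g = x.coeff (π⁻¹ * g * π) := by
  simp [mul_assoc]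

section Tableau

variable {α : Type*} [Fintype α] {lam : YoungDiagram} (t : α ≃ lam.cells)

theorem card_filter_tableau (p : ℕ × ℕ → Prop) [DecidablePred p] :
    #{c | p (t c)} = #{x ∈ lam.cells | p x} := by
  rw [card_equiv t (t := univ.filter fun x : lam.cells => p x) (by simp), univ_eq_attach,
    filter_attach, card_map, card_attach]

theorem card_filter_fst_eq_rowLen (i : ℕ) : #{c | (t c : ℕ × ℕ).1 = i} = lam.rowLen i := by
  rw [card_filter_tableau t (·.1 = i), lam.rowLen_eq_card]
  rfl

theorem card_filter_snd_eq_colLen (j : ℕ) : #{c | (t c : ℕ × ℕ).2 = j} = lam.colLen j := by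
  rw [card_filter_tableau t (·.2 = j), lam.colLen_eq_card]
  rfl

end Tableau

section YoungSymmetrizer

variable {n : ℕ} {lam : YoungDiagram} {t : Fin n ≃ lam.cells}

theorem inColStab_one : InColStab lam t 1 := fun _ => rfl

theorem inRowStab_one : InRowStab lam t 1 := fun _ => rfl

theorem inRowStab_swap_iff {a b : Fin n} :
    InRowStab lam t (swap a b) ↔ (t b : ℕ × ℕ).1 = (t a : ℕ × ℕ).1 :=
  (forall_apply_swap_eq_iff (f := fun m => (t m : ℕ × ℕ).1)).trans eq_comm

theorem inColStab_swap_iff {a b : Fin n} :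
    InColStab lam t (swap a b) ↔ (t b : ℕ × ℕ).2 = (t a : ℕ × ℕ).2 :=
  (forall_apply_swap_eq_iff (f := fun m => (t m : ℕ × ℕ).2)).trans eq_comm

theorem InRowStab.apply_eq_self_of_inColStab {γ σ : Perm (Fin n)} (hσ : InRowStab lam t σ)
    (hγ : InColStab lam t γ) {x : Fin n} (hx : γ (σ x) = x) : σ x = x := by
  have hcol := hγ (σ x)
  rw [hx] at hcol
  exact t.injective (Subtype.ext (Prod.ext (hσ x) hcol.symm))

theorem eq_one_or_eq_swap_of_inColStab_of_inRowStab {γ : Perm (Fin n)} {a b : Fin n}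
    (hab : a ≠ b) (hγ : InColStab lam t γ) (hσ : InRowStab lam t (γ⁻¹ * swap a b)) :
    γ = 1 ∨ γ = swap a b := by
  have hfix : ∀ x, x ≠ a → x ≠ b → (γ⁻¹ * swap a b) x = x := fun x hxa hxb =>
    hσ.apply_eq_self_of_inColStab hγ (by simp [swap_apply_of_ne_of_ne hxa hxb])
  rcases Perm.eq_one_or_eq_swap_of_forall_apply_eq_self hab hfix with h | h
  · exact .inr (inv_mul_eq_one.mp h)
  · exact .inl (by simpa using h)

theorem youngSym_coeff (g : Perm (Fin n)) :
    (youngSym lam t).coeff g = ∑ γ : Perm (Fin n),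
      if InColStab lam t γ ∧ InRowStab lam t (γ⁻¹ * g) then ((Perm.sign γ : ℤ) : ℂ) else 0 := by
  simp only [youngSym, MonoidAlgebra.coeff_sum, Finset.sum_apply']
  refine sum_congr rfl fun γ _ => ?_
  by_cases hγ : InColStab lam t γ
  · simp only [hγ, true_and, apply_ite MonoidAlgebra.coeff, MonoidAlgebra.coeff_single,
      MonoidAlgebra.coeff_zero]
    rw [Fintype.sum_eq_single (γ⁻¹ * g)]
    · split_ifs <;> simp
    · intro σ hσ
      have : γ * σ ≠ g := fun h => hσ (eq_inv_mul_of_mul_eq h)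
      split_ifs <;> simp [this]
  · simp [hγ]

theorem youngSym_coeff_swap {a b : Fin n} (hab : a ≠ b) :
    (youngSym lam t).coeff (swap a b) =
      (if (t b : ℕ × ℕ).1 = (t a : ℕ × ℕ).1 then 1 else 0) -
        (if (t b : ℕ × ℕ).2 = (t a : ℕ × ℕ).2 then 1 else 0) := by
  rw [youngSym_coeff, Fintype.sum_eq_add 1 (swap a b) (by simpa [eq_comm] using hab)]
  · simp [inRowStab_swap_iff, inColStab_swap_iff, Perm.sign_swap hab, sub_eq_add_neg,
      inColStab_one, inRowStab_one]
    split_ifs <;> simp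
  · rintro γ ⟨h1, hswap⟩
    rw [if_neg]
    exact fun ⟨hγ, hσ⟩ => (eq_one_or_eq_swap_of_inColStab_of_inRowStab hab hγ hσ).elim h1 hswap

end YoungSymmetrizer

theorem genChar_coeff_swap {n : ℕ} (lam : YoungDiagram) (t : Fin n ≃ lam.cells) {a b : Fin n}
    (ha : (a : ℕ) = 0) (hab : a ≠ b) :
    (genChar lam t).coeff (swap a b) = ((n - 1)! : ℂ)⁻¹ *
      ((n - 2)! • ∑ c ∈ univ.erase a, (youngSym lam t).coeff (swap a c)) := by
  have hstab : ∀ π : Perm (Fin n), (∀ i : Fin n, (i : ℕ) = 0 → π i = i) ↔ π a = a := fun π =>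
    ⟨fun h => h a ha, fun h i hi => Fin.ext (hi.trans ha.symm) ▸ h⟩
  have hsum := Perm.sum_filter_apply_eq_self hab fun c => (youngSym lam t).coeff (swap a c)
  rw [Fintype.card_fin] at hsum
  rw [← hsum, sum_filter, ← Equiv.sum_comp (Equiv.inv (Perm (Fin n))), genChar,
    MonoidAlgebra.coeff_smul_apply, MonoidAlgebra.coeff_sum, Finset.sum_apply', smul_eq_mul]
  refine congrArg _ (sum_congr rfl fun π _ => ?_)
  simp only [Equiv.inv_apply, hstab, Perm.inv_eq_iff_eq, eq_comm (a := a)]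
  split_ifs with hπ
  · have hconj : π⁻¹ * swap a b * π = swap a (π⁻¹ b) := by
      simpa [Perm.inv_eq_iff_eq.mpr hπ.symm] using (swap_apply_apply π⁻¹ a b).symm
    rw [MonoidAlgebra.coeff_of_mul_mul_of_inv, hconj]
  · rfl

/-- Rows and columns are `0`-indexed: `λ_i` of the paper is `lam.rowLen i` and `λ'_j` is
`lam.colLen j`. -/
theorem genChar_transposition_diaconis
    {n : ℕ} (hn : 2 ≤ n) (lam : YoungDiagram)
    (box : lam.cells)
    (i j : ℕ) (hij : (box : ℕ × ℕ) = (i, j))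
    (t : Fin n ≃ lam.cells) (ht : ∀ a : Fin n, (a : ℕ) = 0 → t a = box) :
    (genChar lam t).coeff (Equiv.swap (⟨0, by omega⟩ : Fin n) ⟨1, by omega⟩) =
      ((lam.rowLen i : ℂ) - (lam.colLen j : ℂ)) / ((n : ℂ) - 1) := by
  set a : Fin n := ⟨0, by omega⟩
  have hta : (t a : ℕ × ℕ) = (i, j) := by rw [ht a rfl, hij]
  have hterm : ∀ c ∈ univ.erase a, (youngSym lam t).coeff (swap a c) =
      (if (t c : ℕ × ℕ).1 = i then 1 else 0) - (if (t c : ℕ × ℕ).2 = j then 1 else 0) :=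
    fun c hc => by rw [youngSym_coeff_swap (ne_of_mem_erase hc).symm, hta]
  have hfact : ((n - 1)! : ℂ) = ((n : ℂ) - 1) * (n - 2)! := by
    rw [← Nat.mul_factorial_pred (by omega : n - 1 ≠ 0), Nat.cast_mul, Nat.cast_pred (by omega),
      Nat.sub_sub]
  have hn1 : (n : ℂ) - 1 ≠ 0 := sub_ne_zero.mpr (by exact_mod_cast (by omega : n ≠ 1))
  have hfact2 : ((n - 2)! : ℂ) ≠ 0 := Nat.cast_ne_zero.mpr (Nat.factorial_ne_zero _)
  rw [genChar_coeff_swap lam t rfl (by simp [a, Fin.ext_iff]), sum_congr rfl hterm,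
    sum_erase _ (by simp [hta]), sum_sub_distrib, sum_boole, sum_boole,
    card_filter_fst_eq_rowLen, card_filter_snd_eq_colLen, nsmul_eq_mul, hfact]
  field_simp
end
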